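/- (Error bound at the true support.) In the noise-free setting, suppose Ψ satisfies RIP of order T with constant δ_T < 1, let d ∈ ℝ^p have |d_i| = λ for all i ∈ A†, and let x ∈ ℝ^p be given by x_i = 0 for i ∉ A† and x_{A†} = (Ψ_{A†}ᵗΨ_{A†})⁻¹(Ψ_{A†}ᵗ y − d_{A†}). Then x†_{A†} − x_{A†} = (Ψ_{A†}ᵗΨ_{A†})⁻¹ d_{A†}, and consequently ‖x† − x‖₂ ≤ √T · λ/(1 − δ_T). -/

import Mathlib

/-!
The RIP lower bound makes the Gram matrix `G = Ψ_{A†}ᵗΨ_{A†}` coercive with constant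
`1 - δ_T`, hence invertible. Since `y = Ψ_{A†} x†_{A†}`, the defining formula for `x_{A†}` gives
`G (x†_{A†} - x_{A†}) = d_{A†}`, and coercivity with Cauchy–Schwarz bounds the error by
`‖d_{A†}‖₂ / (1 - δ_T) = √T λ / (1 - δ_T)`.
-/

open Matrix

/-- The submatrix `Ψ_A` of `Ψ` consisting of the columns indexed by `A`. -/
def colSub {n p : ℕ} (Ψ : Matrix (Fin n) (Fin p) ℝ) (A : Finset (Fin p)) :
    Matrix (Fin n) {i // i ∈ A} ℝ :=
  Matrix.of fun i j => Ψ i j.1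

/-- `Ψ` satisfies the restricted isometry property of order `k` with constant `δ`:
`(1 − δ)‖x‖₂² ≤ ‖Ψx‖₂² ≤ (1 + δ)‖x‖₂²` for all `x` with at most `k` nonzero entries. -/
def HasRIP {n p : ℕ} (Ψ : Matrix (Fin n) (Fin p) ℝ) (k : ℕ) (δ : ℝ) : Prop :=
  ∀ x : Fin p → ℝ, (Finset.univ.filter (fun i => x i ≠ 0)).card ≤ k →
    (1 - δ) * (∑ i, x i ^ 2) ≤ ∑ j, (Ψ *ᵥ x) j ^ 2 ∧
      ∑ j, (Ψ *ᵥ x) j ^ 2 ≤ (1 + δ) * (∑ i, x i ^ 2)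

section ExtendByZero

variable {α : Type*} [DecidableEq α] (A : Finset α)

def extendByZero (v : {i // i ∈ A} → ℝ) : α → ℝ :=
  fun i => if h : i ∈ A then v ⟨i, h⟩ else 0

theorem extendByZero_restrict {f : α → ℝ} (hf : ∀ i ∉ A, f i = 0) :
    extendByZero A (fun j => f j.1) = f := by
  funext i
  by_cases hi : i ∈ A
  · simp [extendByZero, hi]
  · simp [extendByZero, hi, hf i hi]

variable [Fintype α]

theorem sum_sq_extendByZero (v : {i // i ∈ A} → ℝ) :
    ∑ i, extendByZero A v i ^ 2 = ∑ j, v j ^ 2 := by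
  rw [← Finset.sum_subset (Finset.subset_univ A) (by intro i _ hi; simp [extendByZero, hi]),
    ← Finset.sum_coe_sort A]
  exact Finset.sum_congr rfl fun j _ => by simp [extendByZero, j.2]

theorem card_filter_extendByZero_ne_zero_le (v : {i // i ∈ A} → ℝ) :
    (Finset.univ.filter fun i => extendByZero A v i ≠ 0).card ≤ A.card := by
  refine Finset.card_le_card fun i hi => ?_
  by_contra h
  simp [extendByZero, h] at hi

end ExtendByZero

theorem mulVec_extendByZero {n p : ℕ} (Ψ : Matrix (Fin n) (Fin p) ℝ) (A : Finset (Fin p))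
    (v : {i // i ∈ A} → ℝ) : Ψ *ᵥ extendByZero A v = colSub Ψ A *ᵥ v := by
  funext j
  simp only [mulVec, dotProduct, colSub, of_apply]
  rw [← Finset.sum_subset (Finset.subset_univ A) (by intro i _ hi; simp [extendByZero, hi]),
    ← Finset.sum_coe_sort A]
  exact Finset.sum_congr rfl fun i _ => by simp [extendByZero, i.2]

theorem dotProduct_transpose_mul_self_mulVec {m n R : Type*} [Fintype m] [Fintype n]
    [CommSemiring R] (B : Matrix m n R) (v : n → R) :
    v ⬝ᵥ (Bᵀ * B) *ᵥ v = ∑ j, (B *ᵥ v) j ^ 2 := by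
  rw [← mulVec_mulVec, dotProduct_transpose_mulVec]
  simp only [dotProduct, sq]

theorem HasRIP.le_dotProduct_gram_mulVec {n p k : ℕ} {Ψ : Matrix (Fin n) (Fin p) ℝ} {δ : ℝ}
    (hΨ : HasRIP Ψ k δ) {A : Finset (Fin p)} (hA : A.card ≤ k) (v : {i // i ∈ A} → ℝ) :
    (1 - δ) * ∑ i, v i ^ 2 ≤ v ⬝ᵥ ((colSub Ψ A)ᵀ * colSub Ψ A) *ᵥ v := by
  have h := (hΨ (extendByZero A v) ((card_filter_extendByZero_ne_zero_le A v).trans hA)).1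
  rwa [sum_sq_extendByZero, mulVec_extendByZero, ← dotProduct_transpose_mul_self_mulVec] at h

section Coercive

variable {ι : Type*} [Fintype ι] {G : Matrix ι ι ℝ} {c : ℝ}

theorem isUnit_of_coercive [DecidableEq ι] (hc : 0 < c)
    (hG : ∀ v, c * ∑ i, v i ^ 2 ≤ v ⬝ᵥ G *ᵥ v) : IsUnit G := by
  refine mulVec_injective_iff_isUnit.mp <| (injective_iff_map_eq_zero G.mulVecLin).mpr ?_
  intro v hv
  have hv' : G *ᵥ v = 0 := hv
  have hsum : ∑ i, v i ^ 2 = 0 := by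
    have := hG v
    rw [hv', dotProduct_zero] at this
    exact le_antisymm (nonpos_of_mul_nonpos_right this hc) (by positivity)
  have hsq := (Fintype.sum_eq_zero_iff_of_nonneg fun i => sq_nonneg (v i)).mp hsum
  funext i
  simpa using congrFun hsq i

theorem sqrt_sum_sq_le_of_coercive (hc : 0 < c)
    (hG : ∀ v, c * ∑ i, v i ^ 2 ≤ v ⬝ᵥ G *ᵥ v) (v : ι → ℝ) :
    √(∑ i, v i ^ 2) ≤ √(∑ i, (G *ᵥ v) i ^ 2) / c := by
  set N := √(∑ i, v i ^ 2)
  have hN : N ^ 2 = ∑ i, v i ^ 2 := Real.sq_sqrt (Finset.sum_nonneg fun i _ => sq_nonneg _)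
  have key : c * N ^ 2 ≤ N * √(∑ i, (G *ᵥ v) i ^ 2) :=
    hN ▸ (hG v).trans (Real.sum_mul_le_sqrt_mul_sqrt _ _ _)
  rw [le_div_iff₀ hc]
  rcases (show 0 ≤ N from Real.sqrt_nonneg _).eq_or_lt with hN0 | hNpos
  · rw [← hN0, zero_mul]
    positivity
  · nlinarith

end Coercive

theorem sqrt_sum_sq_of_abs_eq {ι : Type*} [Fintype ι] {w : ι → ℝ} {c : ℝ} (hc : 0 ≤ c)
    (hw : ∀ i, |w i| = c) : √(∑ i, w i ^ 2) = √(Fintype.card ι) * c := by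
  rw [Finset.sum_congr rfl fun i _ => by rw [← sq_abs, hw], Finset.sum_const, nsmul_eq_mul,
    Finset.card_univ, Real.sqrt_mul (Nat.cast_nonneg _), Real.sqrt_sq hc]

theorem stmt_18_general {n p : ℕ} (Ψ : Matrix (Fin n) (Fin p) ℝ)
    (xdag : Fin p → ℝ) (Adag : Finset (Fin p))
    (hAdag : Adag = Finset.univ.filter (fun i => xdag i ≠ 0))
    (T : ℕ) (hT : T = Adag.card)
    (y : Fin n → ℝ) (hy : y = Ψ *ᵥ xdag)
    (δT : ℝ) (hδ1 : δT < 1)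
    (hRIP : HasRIP Ψ T δT)
    (lam : ℝ) (hlam : 0 < lam)
    (d x : Fin p → ℝ)
    (hdA : ∀ i ∈ Adag, |d i| = lam)
    (hxI : ∀ i ∉ Adag, x i = 0)
    (hxA : (fun j : {i // i ∈ Adag} => x j.1) =
      ((colSub Ψ Adag)ᵀ * colSub Ψ Adag)⁻¹ *ᵥ
        ((colSub Ψ Adag)ᵀ *ᵥ y - fun j => d j.1)) :
    ((fun j : {i // i ∈ Adag} => xdag j.1 - x j.1) =
      ((colSub Ψ Adag)ᵀ * colSub Ψ Adag)⁻¹ *ᵥ fun j => d j.1) ∧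
    Real.sqrt (∑ i, (xdag i - x i) ^ 2) ≤ Real.sqrt T * lam / (1 - δT) := by
  set B := colSub Ψ Adag
  set G := Bᵀ * B
  have hxdag : ∀ i ∉ Adag, xdag i = 0 := fun i hi => by simpa [hAdag] using hi
  have hcoer : ∀ v, (1 - δT) * ∑ i, v i ^ 2 ≤ v ⬝ᵥ G *ᵥ v :=
    hRIP.le_dotProduct_gram_mulVec hT.ge
  have hG : IsUnit G.det :=
    (isUnit_iff_isUnit_det G).mp (isUnit_of_coercive (sub_pos.2 hδ1) hcoer)
  have hΨx : Ψ *ᵥ xdag = B *ᵥ fun j => xdag j.1 := by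
    rw [← mulVec_extendByZero, extendByZero_restrict Adag hxdag]
  have herr : (fun j : {i // i ∈ Adag} => xdag j.1 - x j.1) = G⁻¹ *ᵥ fun j => d j.1 := by
    change (fun j : {i // i ∈ Adag} => xdag j.1) - (fun j => x j.1) = _
    rw [hxA, hy, hΨx, mulVec_mulVec, mulVec_sub, mulVec_mulVec, nonsing_inv_mul G hG,
      one_mulVec, sub_sub_cancel]
  refine ⟨herr, ?_⟩
  have hGerr : G *ᵥ (fun j : {i // i ∈ Adag} => xdag j.1 - x j.1) = fun j => d j.1 := by
    rw [herr, mulVec_mulVec, mul_nonsing_inv G hG, one_mulVec]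
  have herr_out : ∀ i ∉ Adag, xdag i - x i = 0 := fun i hi => by
    rw [hxdag i hi, hxI i hi, sub_zero]
  calc √(∑ i, (xdag i - x i) ^ 2) = √(∑ j : {i // i ∈ Adag}, (xdag j.1 - x j.1) ^ 2) := by
        rw [← sum_sq_extendByZero, extendByZero_restrict Adag herr_out]
    _ ≤ √(∑ j, (G *ᵥ fun j : {i // i ∈ Adag} => xdag j.1 - x j.1) j ^ 2) / (1 - δT) :=
        sqrt_sum_sq_le_of_coercive (sub_pos.2 hδ1) hcoer _
    _ = √T * lam / (1 - δT) := by
        rw [hGerr, sqrt_sum_sq_of_abs_eq (w := fun j : {i // i ∈ Adag} => d j.1) hlam.le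
          fun j => hdA j.1 j.2, Fintype.card_coe, hT]

/-- error bound at the true support: in the noise-free setting, with RIP of
order `T` and constant `δ_T < 1`, `|d_i| = λ` on `A†`, and `x` supported on `A†` with
`x_{A†} = (Ψ_{A†}ᵗΨ_{A†})⁻¹(Ψ_{A†}ᵗ y − d_{A†})`, one has
`x†_{A†} − x_{A†} = (Ψ_{A†}ᵗΨ_{A†})⁻¹ d_{A†}` and `‖x† − x‖₂ ≤ √T·λ/(1 − δ_T)`. -/
theorem stmt_18 {n p : ℕ} (Ψ : Matrix (Fin n) (Fin p) ℝ)
    (xdag : Fin p → ℝ) (Adag : Finset (Fin p))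
    (hAdag : Adag = Finset.univ.filter (fun i => xdag i ≠ 0))
    (T : ℕ) (hT : T = Adag.card)
    (y : Fin n → ℝ) (hy : y = Ψ *ᵥ xdag)
    (δT : ℝ) (hδ0 : 0 < δT) (hδ1 : δT < 1)
    (hRIP : HasRIP Ψ T δT)
    (lam : ℝ) (hlam : 0 < lam)
    (d x : Fin p → ℝ)
    (hdA : ∀ i ∈ Adag, |d i| = lam)
    (hxI : ∀ i ∉ Adag, x i = 0)
    (hxA : (fun j : {i // i ∈ Adag} => x j.1) =
      ((colSub Ψ Adag)ᵀ * colSub Ψ Adag)⁻¹ *ᵥ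
        ((colSub Ψ Adag)ᵀ *ᵥ y - fun j => d j.1)) :
    ((fun j : {i // i ∈ Adag} => xdag j.1 - x j.1) =
      ((colSub Ψ Adag)ᵀ * colSub Ψ Adag)⁻¹ *ᵥ fun j => d j.1) ∧
    Real.sqrt (∑ i, (xdag i - x i) ^ 2) ≤ Real.sqrt T * lam / (1 - δT) :=
  stmt_18_general Ψ xdag Adag hAdag T hT y hy δT hδ1 hRIP lam hlam d x hdA hxI hxA
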